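/- Let S' ⊆ S be nonempty compact convex subsets of ℝ², x ∈ S, p = P_{S'}(x), r = ‖x − p‖ > 0, and u = (x − p)/r. Then the convex hull C = conv(S' ∪ {x}) satisfies C ⊆ S, h_C(u) = h_{S'}(u) + r, and h_C(v) = h_{S'}(v) for every unit vector v with ⟨v, u⟩ ≤ 0. -/

import Mathlib

noncomputable def supportFn (K : Set (EuclideanSpace ℝ (Fin 2)))
    (u : EuclideanSpace ℝ (Fin 2)) : ℝ :=
  sSup ((fun x => (inner ℝ x u : ℝ)) '' K)

/-!
The support function of `conv (K ∪ {x})` is the pointwise maximum of `h_K` and `⟨x, ·⟩`.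
By the variational inequality for the projection, `p` maximises `⟨·, u⟩` on `S'`, and
`x = p + r • u`, so `⟨x, u⟩ = h_{S'}(u) + r` while `⟨x, v⟩ ≤ ⟨p, v⟩ ≤ h_{S'}(v)` whenever
`⟨v, u⟩ ≤ 0`.
-/

open scoped InnerProductSpace

theorem Real.sSup_convexHull (t : Set ℝ) : sSup (convexHull ℝ t) = sSup t := by
  rcases t.eq_empty_or_nonempty with rfl | hne
  · rw [convexHull_empty]
  by_cases hbdd : BddAbove t
  · have hle : convexHull ℝ t ⊆ Set.Iic (sSup t) :=
      convexHull_min (fun _ hy => le_csSup hbdd hy) (convex_Iic _)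
    exact le_antisymm (csSup_le (hne.mono (subset_convexHull ℝ t)) hle)
      (csSup_le_csSup ⟨_, hle⟩ hne (subset_convexHull ℝ t))
  · have hunbdd : ¬BddAbove (convexHull ℝ t) := fun h => hbdd (h.mono (subset_convexHull ℝ t))
    rw [Real.sSup_of_not_bddAbove hbdd, Real.sSup_of_not_bddAbove hunbdd]

theorem real_inner_sub_sub_nonpos_of_forall_norm_sub_le {E : Type*} [NormedAddCommGroup E]
    [InnerProductSpace ℝ E] {K : Set E} (hK : Convex ℝ K) {x p : E} (hp : p ∈ K)
    (hmin : ∀ y ∈ K, ‖x - p‖ ≤ ‖x - y‖) : ∀ y ∈ K, ⟪x - p, y - p⟫_ℝ ≤ 0 := by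
  have : Nonempty K := ⟨⟨p, hp⟩⟩
  refine (norm_eq_iInf_iff_real_inner_le_zero hK hp).mp (le_antisymm ?_ ?_)
  · exact le_ciInf fun y => hmin y y.2
  · have hbdd : BddBelow (Set.range fun y : K => ‖x - y‖) :=
      ⟨0, Set.forall_mem_range.mpr fun _ => norm_nonneg _⟩
    exact ciInf_le hbdd ⟨p, hp⟩

section supportFn

variable {K : Set (EuclideanSpace ℝ (Fin 2))} {v : EuclideanSpace ℝ (Fin 2)}

theorem supportFn_convexHull : supportFn (convexHull ℝ K) v = supportFn K v := by
  have himage : (fun y => ⟪y, v⟫_ℝ) '' convexHull ℝ K = convexHull ℝ ((fun y => ⟪y, v⟫_ℝ) '' K) :=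
    LinearMap.image_convexHull ((innerₗ _).flip v) K
  rw [supportFn, supportFn, himage, Real.sSup_convexHull]

theorem supportFn_insert (x : EuclideanSpace ℝ (Fin 2)) (hne : K.Nonempty)
    (hbdd : BddAbove ((fun y => ⟪y, v⟫_ℝ) '' K)) :
    supportFn (insert x K) v = max ⟪x, v⟫_ℝ (supportFn K v) := by
  rw [supportFn, Set.image_insert_eq, csSup_insert hbdd (hne.image _), supportFn]

theorem supportFn_convexHull_union_singleton (x : EuclideanSpace ℝ (Fin 2)) (hne : K.Nonempty)
    (hbdd : BddAbove ((fun y => ⟪y, v⟫_ℝ) '' K)) :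
    supportFn (convexHull ℝ (K ∪ {x})) v = max ⟪x, v⟫_ℝ (supportFn K v) := by
  rw [supportFn_convexHull, Set.union_singleton, supportFn_insert x hne hbdd]

theorem real_inner_le_supportFn (hbdd : BddAbove ((fun y => ⟪y, v⟫_ℝ) '' K))
    {y : EuclideanSpace ℝ (Fin 2)} (hy : y ∈ K) : ⟪y, v⟫_ℝ ≤ supportFn K v :=
  le_csSup hbdd ⟨y, hy, rfl⟩

theorem supportFn_eq_of_forall_le {p : EuclideanSpace ℝ (Fin 2)} (hp : p ∈ K)
    (hmax : ∀ y ∈ K, ⟪y, v⟫_ℝ ≤ ⟪p, v⟫_ℝ) : supportFn K v = ⟪p, v⟫_ℝ :=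
  IsGreatest.csSup_eq ⟨⟨p, hp, rfl⟩, by rintro _ ⟨y, hy, rfl⟩; exact hmax y hy⟩

end supportFn

theorem hull_support_properties_general
    (S S' : Set (EuclideanSpace ℝ (Fin 2)))
    (hS'c : IsCompact S') (hS'cv : Convex ℝ S')
    (hScv : Convex ℝ S)
    (hsub : S' ⊆ S)
    (x : EuclideanSpace ℝ (Fin 2)) (hx : x ∈ S)
    (p : EuclideanSpace ℝ (Fin 2)) (hp : p ∈ S')
    (hproj : ∀ y ∈ S', ‖x - p‖ ≤ ‖x - y‖)
    (r : ℝ) (hr : r = ‖x - p‖) (hrpos : 0 < r)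
    (u : EuclideanSpace ℝ (Fin 2)) (hu : u = r⁻¹ • (x - p)) :
    convexHull ℝ (S' ∪ {x}) ⊆ S ∧
    supportFn (convexHull ℝ (S' ∪ {x})) u = supportFn S' u + r ∧
    (∀ v : EuclideanSpace ℝ (Fin 2), ‖v‖ = 1 → (inner ℝ v u : ℝ) ≤ 0 →
      supportFn (convexHull ℝ (S' ∪ {x})) v = supportFn S' v) := by
  have hbdd : ∀ v, BddAbove ((fun y => ⟪y, v⟫_ℝ) '' S') := fun v =>
    hS'c.bddAbove_image (by fun_prop)
  have hx_eq : x = p + r • u := by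
    rw [hu, smul_inv_smul₀ hrpos.ne', add_sub_cancel]
  have hu_norm : ‖u‖ = 1 := by
    rw [hu, norm_smul, norm_inv, Real.norm_eq_abs, abs_of_pos hrpos, ← hr, inv_mul_cancel₀ hrpos.ne']
  have hp_max : ∀ y ∈ S', ⟪y, u⟫_ℝ ≤ ⟪p, u⟫_ℝ := fun y hy => by
    have hvar := real_inner_sub_sub_nonpos_of_forall_norm_sub_le hS'cv hp hproj y hy
    rw [hx_eq, add_sub_cancel_left, real_inner_smul_left, inner_sub_right] at hvar
    rw [real_inner_comm u y, real_inner_comm u p]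
    exact sub_nonpos.mp (nonpos_of_mul_nonpos_right hvar hrpos)
  refine ⟨convexHull_min (Set.union_subset hsub (Set.singleton_subset_iff.mpr hx)) hScv, ?_, ?_⟩
  · have hxu : ⟪x, u⟫_ℝ = ⟪p, u⟫_ℝ + r := by
      rw [hx_eq, inner_add_left, real_inner_smul_left, real_inner_self_eq_norm_sq, hu_norm]
      ring
    rw [supportFn_convexHull_union_singleton x ⟨p, hp⟩ (hbdd u), supportFn_eq_of_forall_le hp hp_max,
      hxu, max_eq_left (le_add_of_nonneg_right hrpos.le)]
  · intro v _ hvu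
    have hxv : ⟪x, v⟫_ℝ ≤ ⟪p, v⟫_ℝ := by
      rw [hx_eq, inner_add_left, real_inner_smul_left, real_inner_comm v u]
      exact add_le_of_nonpos_right (mul_nonpos_of_nonneg_of_nonpos hrpos.le hvu)
    rw [supportFn_convexHull_union_singleton x ⟨p, hp⟩ (hbdd v),
      max_eq_right (hxv.trans (real_inner_le_supportFn (hbdd v) hp))]

theorem hull_support_properties
    (S S' : Set (EuclideanSpace ℝ (Fin 2)))
    (hS' : S'.Nonempty) (hS'c : IsCompact S') (hS'cv : Convex ℝ S')
    (hS : S.Nonempty) (hSc : IsCompact S) (hScv : Convex ℝ S)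
    (hsub : S' ⊆ S)
    (x : EuclideanSpace ℝ (Fin 2)) (hx : x ∈ S) (hxS' : x ∉ S')
    (p : EuclideanSpace ℝ (Fin 2)) (hp : p ∈ S')
    (hproj : ∀ y ∈ S', ‖x - p‖ ≤ ‖x - y‖)
    (r : ℝ) (hr : r = ‖x - p‖) (hrpos : 0 < r)
    (u : EuclideanSpace ℝ (Fin 2)) (hu : u = r⁻¹ • (x - p)) :
    convexHull ℝ (S' ∪ {x}) ⊆ S ∧
    supportFn (convexHull ℝ (S' ∪ {x})) u = supportFn S' u + r ∧
    (∀ v : EuclideanSpace ℝ (Fin 2), ‖v‖ = 1 → (inner ℝ v u : ℝ) ≤ 0 →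
      supportFn (convexHull ℝ (S' ∪ {x})) v = supportFn S' v) :=
  hull_support_properties_general S S' hS'c hS'cv hScv hsub x hx p hp hproj r hr hrpos u hu
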